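/- arXiv:1308.6658 — 2 statements merged into one kernel-verified Lean document; each statement's English description precedes it below -/
import Mathlib

section
/- Let G : [a,b] → ℝ be a monotone Lipschitz continuous function with Lipschitz constant L > 0. Then for all c, d ∈ [a,b], |∫_c^d (G(x) - G(c)) dx| ≥ (G(d) - G(c))² / (2L). -/
/-!
Put `M = G d - G c` for monotone `G` and `c ≤ d`. Before `d`, on a stretch of length `M / L`, the
Lipschitz bound gives `G x - G c ≥ M - L (d - x)`, and before that stretch `G x - G c ≥ 0`.
Integrating this ramp gives `M² / (2L)`. The other cases follow by the reflection
`G ↦ -G (-·)` for `d ≤ c` and by `G ↦ -G` for antitone `G`.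
-/

open MeasureTheory intervalIntegral Set

theorem integral_ramp (M L d : ℝ) (hL : L ≠ 0) :
    ∫ x in d - M / L..d, (M - L * (d - x)) = M ^ 2 / (2 * L) := by
  rw [integral_comp_sub_left (fun u => M - L * u),
    integral_sub intervalIntegrable_const ((continuous_const_mul L).intervalIntegrable _ _),
    intervalIntegral.integral_const_mul]
  simp only [sub_self, sub_sub_cancel, intervalIntegral.integral_const, integral_id, smul_eq_mul]
  field_simp
  ring

theorem sub_le_mul_sub_of_abs_sub_le {u v x y L : ℝ} (h : |u - v| ≤ L * |x - y|) (hyx : y ≤ x) :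
    u - v ≤ L * (x - y) :=
  (le_abs_self _).trans (by rwa [abs_of_nonneg (sub_nonneg.2 hyx)] at h)

theorem integral_neg_comp_neg_sub (G : ℝ → ℝ) (c d : ℝ) :
    ∫ y in -c..-d, (-G (-y) - -G c) = ∫ x in c..d, (G x - G c) := by
  rw [integral_comp_neg (fun x => -G x - -G c), neg_neg, neg_neg, integral_symm,
    ← intervalIntegral.integral_neg]
  simp only [neg_sub_neg, neg_sub]

theorem sq_div_le_integral_sub_of_monotoneOn {G : ℝ → ℝ} {c d L : ℝ} (hcd : c ≤ d) (hL : 0 < L)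
    (hG : MonotoneOn G (Icc c d)) (hGd : ∀ x ∈ Icc c d, G d - G x ≤ L * (d - x)) :
    (G d - G c) ^ 2 / (2 * L) ≤ ∫ x in c..d, (G x - G c) := by
  set M := G d - G c
  set s := d - M / L
  have hM : 0 ≤ M := sub_nonneg.2 (hG (left_mem_Icc.2 hcd) (right_mem_Icc.2 hcd) hcd)
  have hcs : c ≤ s := by
    have : M / L ≤ d - c := (div_le_iff₀' hL).2 (hGd c (left_mem_Icc.2 hcd))
    linarith
  have hsd : s ≤ d := sub_le_self d (div_nonneg hM hL.le)
  have hs : s ∈ uIcc c d := by rw [uIcc_of_le hcd]; exact ⟨hcs, hsd⟩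
  have hint : IntervalIntegrable (fun x => G x - G c) volume c d :=
    (MonotoneOn.intervalIntegrable (by rwa [uIcc_of_le hcd])).sub intervalIntegrable_const
  have hint_cs := hint.mono_set (uIcc_subset_uIcc left_mem_uIcc hs)
  have hint_sd := hint.mono_set (uIcc_subset_uIcc hs right_mem_uIcc)
  calc M ^ 2 / (2 * L) = ∫ x in s..d, (M - L * (d - x)) := (integral_ramp M L d hL.ne').symm
    _ ≤ ∫ x in s..d, (G x - G c) :=
        integral_mono_on hsd ((by fun_prop : Continuous _).intervalIntegrable _ _) hint_sd
          fun x hx => by linarith [hGd x ⟨hcs.trans hx.1, hx.2⟩]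
    _ ≤ (∫ x in c..s, (G x - G c)) + ∫ x in s..d, (G x - G c) :=
        le_add_of_nonneg_left <| intervalIntegral.integral_nonneg hcs fun x hx =>
          sub_nonneg.2 (hG (left_mem_Icc.2 hcd) ⟨hx.1, hx.2.trans hsd⟩ hx.1)
    _ = ∫ x in c..d, (G x - G c) := integral_add_adjacent_intervals hint_cs hint_sd

theorem sq_div_le_integral_sub_of_monotoneOn_uIcc {G : ℝ → ℝ} {c d L : ℝ} (hL : 0 < L)
    (hG : MonotoneOn G (uIcc c d))
    (hLip : ∀ x ∈ uIcc c d, ∀ y ∈ uIcc c d, |G x - G y| ≤ L * |x - y|) :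
    (G d - G c) ^ 2 / (2 * L) ≤ ∫ x in c..d, (G x - G c) := by
  rcases le_total c d with hcd | hdc
  · rw [uIcc_of_le hcd] at hG hLip
    exact sq_div_le_integral_sub_of_monotoneOn hcd hL hG fun x hx =>
      sub_le_mul_sub_of_abs_sub_le (hLip d (right_mem_Icc.2 hcd) x hx) hx.2
  · rw [uIcc_of_ge hdc] at hG hLip
    have hmem : ∀ y ∈ Icc (-c) (-d), -y ∈ Icc d c := fun y hy => ⟨le_neg.1 hy.2, neg_le.1 hy.1⟩
    have key := sq_div_le_integral_sub_of_monotoneOn (G := fun y => -G (-y)) (neg_le_neg hdc) hL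
      (fun x hx y hy hxy => neg_le_neg (hG (hmem y hy) (hmem x hx) (neg_le_neg hxy)))
      fun y hy => by
        have := sub_le_mul_sub_of_abs_sub_le
          (hLip (-y) (hmem y hy) d (left_mem_Icc.2 hdc)) (hmem y hy).1
        simp only [neg_neg]
        linarith
    simp only [neg_neg] at key
    rwa [integral_neg_comp_neg_sub, neg_sub_neg, ← neg_sub, neg_sq] at key

theorem lipschitz_monotone_integral_lower_bound_general
    (a b L : ℝ) (G : ℝ → ℝ) (hL : 0 < L)
    (hmono : MonotoneOn G (Set.Icc a b) ∨ AntitoneOn G (Set.Icc a b))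
    (hLip : ∀ x ∈ Set.Icc a b, ∀ y ∈ Set.Icc a b, |G x - G y| ≤ L * |x - y|)
    (c d : ℝ) (hc : c ∈ Set.Icc a b) (hd : d ∈ Set.Icc a b) :
    |∫ x in c..d, (G x - G c)| ≥ (G d - G c) ^ 2 / (2 * L) := by
  have hsub : uIcc c d ⊆ Icc a b := uIcc_subset_Icc hc hd
  have hLip' : ∀ x ∈ uIcc c d, ∀ y ∈ uIcc c d, |G x - G y| ≤ L * |x - y| :=
    fun x hx y hy => hLip x (hsub hx) y (hsub hy)
  rcases hmono with hG | hG
  · exact (sq_div_le_integral_sub_of_monotoneOn_uIcc hL (hG.mono hsub) hLip').trans (le_abs_self _)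
  · calc (G d - G c) ^ 2 / (2 * L) = (-G d - -G c) ^ 2 / (2 * L) := by ring
      _ ≤ ∫ x in c..d, (-G x - -G c) :=
        sq_div_le_integral_sub_of_monotoneOn_uIcc (G := fun x => -G x) hL (hG.mono hsub).neg
          fun x hx y hy => by rw [neg_sub_neg, abs_sub_comm x y]; exact hLip' y hy x hx
      _ = -∫ x in c..d, (G x - G c) := by
        rw [← intervalIntegral.integral_neg]; simp only [neg_sub_neg, neg_sub]
      _ ≤ |∫ x in c..d, (G x - G c)| := neg_le_abs _

theorem lipschitz_monotone_integral_lower_bound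
    (a b L : ℝ) (hab : a ≤ b) (G : ℝ → ℝ) (hL : 0 < L)
    (hmono : MonotoneOn G (Set.Icc a b) ∨ AntitoneOn G (Set.Icc a b))
    (hLip : ∀ x ∈ Set.Icc a b, ∀ y ∈ Set.Icc a b, |G x - G y| ≤ L * |x - y|)
    (c d : ℝ) (hc : c ∈ Set.Icc a b) (hd : d ∈ Set.Icc a b) :
    |∫ x in c..d, (G x - G c)| ≥ (G d - G c) ^ 2 / (2 * L) :=
  lipschitz_monotone_integral_lower_bound_general a b L G hL hmono hLip c d hc hd
end

section
/- Let F : ℝ × ℝ → ℝ be nondecreasing in its first argument and nonincreasing in its second argument. Then for all u, v, k ∈ ℝ, sign⁺(u - k)·(F(u, v) - F(k, k)) ≥ F(max(u,k), max(v,k)) - F(k, k). -/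
theorem monotone_flux_signPlus_inequality_general (F : ℝ → ℝ → ℝ)
    (hmono₂ : ∀ a : ℝ, Antitone fun b => F a b)
    (u v k : ℝ) :
    (if 0 < u - k then (1 : ℝ) else 0) * (F u v - F k k) ≥
      F (max u k) (max v k) - F k k := by
  split_ifs with h
  · rw [max_eq_left (sub_pos.mp h).le, one_mul]
    exact sub_le_sub_right (hmono₂ u (le_max_left v k)) _
  · rw [max_eq_right (sub_nonpos.mp (not_lt.mp h)), zero_mul]
    exact sub_nonpos.mpr (hmono₂ k (le_max_right v k))

theorem monotone_flux_signPlus_inequality (F : ℝ → ℝ → ℝ)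
    (hmono₁ : ∀ b : ℝ, Monotone fun a => F a b)
    (hmono₂ : ∀ a : ℝ, Antitone fun b => F a b)
    (u v k : ℝ) :
    (if 0 < u - k then (1 : ℝ) else 0) * (F u v - F k k) ≥
      F (max u k) (max v k) - F k k :=
  monotone_flux_signPlus_inequality_general F hmono₂ u v k
end
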